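/- Soundness of successful TSLD-derivations: if there is a successful TSLD-derivation of query Q from program P with computed answer substitution θ, then θ(Q) is a logical consequence of P, i.e., every model of P (in the typed three-valued semantics) is a model of θ(Q). -/

import Mathlib

/-- Base types for constants. -/
inductive Ty : Type
  | int | float | atom | str
  deriving DecidableEq

/-- First-order terms: variables, typed constants, and compound terms. -/
inductive Term : Type
  | var : ℕ → Term
  | const : ℕ → Ty → Term
  | app : ℕ → List Term → Term

mutual
  /-- Application of a substitution to a term. -/
  def subst (θ : ℕ → Term) : Term → Term
    | .var x => θ x
    | .const c τ => .const c τ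
    | .app f ts => .app f (substList θ ts)
  /-- Application of a substitution to a list of terms. -/
  def substList (θ : ℕ → Term) : List Term → List Term
    | [] => []
    | t :: ts => subst θ t :: substList θ ts
end

mutual
  /-- Occurrence of a variable in a term. -/
  def occurs (x : ℕ) : Term → Bool
    | .var y => x == y
    | .const _ _ => false
    | .app _ ts => occursList x ts
  /-- Occurrence of a variable in a list of terms. -/
  def occursList (x : ℕ) : List Term → Bool
    | [] => false
    | t :: ts => occurs x t || occursList x ts
end

/-- Composition of substitutions: (θ ∘ η)(X) = θ(η(X)). -/
def comp (θ η : ℕ → Term) : ℕ → Term := fun x => subst θ (η x)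

/-- The substitution binding the single variable x to t. -/
def single (x : ℕ) (t : Term) : ℕ → Term := fun y => if y = x then t else .var y

/-- θ is a unifier of t₁ and t₂. -/
def IsUnifier (θ : ℕ → Term) (t₁ t₂ : Term) : Prop := subst θ t₁ = subst θ t₂

/-- θ is a most general unifier of t₁ and t₂. -/
def IsMGU (θ : ℕ → Term) (t₁ t₂ : Term) : Prop :=
  IsUnifier θ t₁ t₂ ∧ ∀ η, IsUnifier η t₁ t₂ → ∃ δ, ∀ x, η x = subst δ (θ x)

/-- θ is idempotent. -/
def Idempotent (θ : ℕ → Term) : Prop := ∀ t, subst θ (subst θ t) = subst θ t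

/-- Configurations of the typed unification algorithm: a multiset of equations
together with the Boolean flag, or the halting value wrong. -/
inductive Config : Type
  | state : Multiset (Term × Term) → Bool → Config
  | wrong : Config

/-- Application of a single binding to an equation. -/
def substEq (x : ℕ) (t : Term) (e : Term × Term) : Term × Term :=
  (subst (single x t) e.1, subst (single x t) e.2)

/-- The rewrite rules of the typed unification algorithm. -/
inductive Step : Config → Config → Prop
  | decompose (f : ℕ) (ts ss : List Term) (R : Multiset (Term × Term)) (F : Bool)
      (h : ts.length = ss.length) :
      Step (.state ((Term.app f ts, Term.app f ss) ::ₘ R) F)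
           (.state (↑(ts.zip ss) + R) F)
  | clash (f g : ℕ) (ts ss : List Term) (R : Multiset (Term × Term)) (F : Bool)
      (h : f ≠ g ∨ ts.length ≠ ss.length) :
      Step (.state ((Term.app f ts, Term.app g ss) ::ₘ R) F) .wrong
  | constDel (c : ℕ) (τ : Ty) (R : Multiset (Term × Term)) (F : Bool) :
      Step (.state ((Term.const c τ, Term.const c τ) ::ₘ R) F) (.state R F)
  | constFalse (c d : ℕ) (τ : Ty) (R : Multiset (Term × Term)) (F : Bool) (h : c ≠ d) :
      Step (.state ((Term.const c τ, Term.const d τ) ::ₘ R) F) (.state R false)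
  | constWrong (c d : ℕ) (τ σ : Ty) (R : Multiset (Term × Term)) (F : Bool) (h : τ ≠ σ) :
      Step (.state ((Term.const c τ, Term.const d σ) ::ₘ R) F) .wrong
  | constApp (c : ℕ) (τ : Ty) (f : ℕ) (ts : List Term) (R : Multiset (Term × Term)) (F : Bool) :
      Step (.state ((Term.const c τ, Term.app f ts) ::ₘ R) F) .wrong
  | appConst (c : ℕ) (τ : Ty) (f : ℕ) (ts : List Term) (R : Multiset (Term × Term)) (F : Bool) :
      Step (.state ((Term.app f ts, Term.const c τ) ::ₘ R) F) .wrong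
  | varDel (x : ℕ) (R : Multiset (Term × Term)) (F : Bool) :
      Step (.state ((Term.var x, Term.var x) ::ₘ R) F) (.state R F)
  | orient (x : ℕ) (t : Term) (R : Multiset (Term × Term)) (F : Bool)
      (h : ∀ y, t ≠ Term.var y) :
      Step (.state ((t, Term.var x) ::ₘ R) F) (.state ((Term.var x, t) ::ₘ R) F)
  | eliminate (x : ℕ) (t : Term) (R : Multiset (Term × Term)) (F : Bool)
      (h₁ : occurs x t = false)
      (h₂ : ∃ e ∈ R, occurs x e.1 = true ∨ occurs x e.2 = true) :
      Step (.state ((Term.var x, t) ::ₘ R) F)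
           (.state ((Term.var x, t) ::ₘ R.map (substEq x t)) F)
  | occursFail (x : ℕ) (t : Term) (R : Multiset (Term × Term)) (F : Bool)
      (h₁ : occurs x t = true) (h₂ : t ≠ Term.var x) :
      Step (.state ((Term.var x, t) ::ₘ R) F) (.state R false)

/-- Reachability by rewrite steps. -/
def Reaches : Config → Config → Prop := Relation.ReflTransGen Step

/-- A configuration to which no rule applies. -/
def NormalCfg (c : Config) : Prop := ∀ c', ¬ Step c c'

/-- The typed unification algorithm on input S outputs wrong. -/
def OutputsWrong (S : Multiset (Term × Term)) : Prop :=
  Reaches (Config.state S true) Config.wrong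

/-- The typed unification algorithm on input S outputs false. -/
def OutputsFalse (S : Multiset (Term × Term)) : Prop :=
  ∃ S', Reaches (Config.state S true) (Config.state S' false) ∧ NormalCfg (Config.state S' false)

/-- The typed unification algorithm on input S₀ succeeds with solved set S. -/
def OutputsSet (S₀ S : Multiset (Term × Term)) : Prop :=
  Reaches (Config.state S₀ true) (Config.state S true) ∧ NormalCfg (Config.state S true)

/-- Weak Kleene three-valued logic values. -/
inductive V3 : Type
  | tt | ff | wrong
  deriving DecidableEq

namespace V3

/-- Weak Kleene conjunction. -/
def and : V3 → V3 → V3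
  | tt, tt => tt
  | tt, ff => ff
  | ff, tt => ff
  | ff, ff => ff
  | _, _ => wrong

/-- Weak Kleene disjunction. -/
def or : V3 → V3 → V3
  | tt, tt => tt
  | tt, ff => tt
  | ff, tt => tt
  | ff, ff => ff
  | _, _ => wrong

/-- Weak Kleene negation. -/
def neg : V3 → V3
  | tt => ff
  | ff => tt
  | wrong => wrong

/-- Weak Kleene implication p → q := (¬p) ∨ q. -/
def imp (p q : V3) : V3 := or (neg p) q

end V3

/-- Atoms: a predicate symbol applied to a list of terms. -/
structure Atom : Type where
  pred : ℕ
  args : List Term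

/-- A clause H ← B̄. -/
structure Clause : Type where
  head : Atom
  body : List Atom

/-- Apply a substitution to an atom. -/
def substAtom (θ : ℕ → Term) (A : Atom) : Atom := ⟨A.pred, substList θ A.args⟩

/-- Encode an atom as a term; unification of atoms is unification of the
encoding terms. -/
def atomT (A : Atom) : Term := Term.app A.pred A.args

/-- Three-valued interpretations: a predicate symbol applied to (instantiated)
argument terms receives a truth value in V3 (wrong representing a type error,
i.e. arguments outside the typed domain of the predicate). -/
def Interp : Type := ℕ → List Term → V3

/-- Value of an atom under an interpretation and a state σ. -/
def atomVal (I : Interp) (σ : ℕ → Term) (A : Atom) : V3 :=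
  I A.pred (substList σ A.args)

/-- Value of a query: weak Kleene conjunction of the values of its atoms. -/
def queryVal (I : Interp) (σ : ℕ → Term) (Q : List Atom) : V3 :=
  (Q.map (atomVal I σ)).foldr V3.and V3.tt

/-- I is a model of the clause c: under every state the clause is true. -/
def ModelsClause (I : Interp) (c : Clause) : Prop :=
  ∀ σ, V3.imp (queryVal I σ c.body) (atomVal I σ c.head) = V3.tt

/-- I is a model of the program P. -/
def ModelsProgram (I : Interp) (P : List Clause) : Prop :=
  ∀ c ∈ P, ModelsClause I c

/-- I is a model of the query Q. -/
def ModelsQuery (I : Interp) (Q : List Atom) : Prop :=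
  ∀ σ, queryVal I σ Q = V3.tt

/-- A substitution which merely renames variables (injectively). -/
def IsRenaming (ρ : ℕ → Term) : Prop :=
  ∃ f : ℕ → ℕ, Function.Injective f ∧ ∀ x, ρ x = Term.var (f x)

/-- Successful TSLD-derivations of a query in P, together with the computed
answer substitution (composition of the mgus used): a step selects an atom A,
unifies it with the renamed head of an input clause via an mgu θ (typed
unification agrees with standard unification on successes), and replaces A by
the instantiated clause body. -/
inductive Deriv (P : List Clause) : List Atom → (ℕ → Term) → Prop
  | done : Deriv P [] Term.var
  | step (Q₁ Q₂ : List Atom) (A : Atom) (c : Clause) (ρ θ η : ℕ → Term)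
      (hc : c ∈ P) (hρ : IsRenaming ρ)
      (hmgu : IsMGU θ (atomT A) (atomT (substAtom ρ c.head)))
      (hrest : Deriv P ((Q₁ ++ (c.body.map (substAtom ρ)) ++ Q₂).map (substAtom θ)) η) :
      Deriv P (Q₁ ++ A :: Q₂) (comp η θ)

/-
If every model of `P` makes the instantiated resolvent true under all states, it makes the
selected atom true as well: the instantiating substitution unifies the atom with the renamed
clause head, so both get the same value, and the head is true because the (instantiated, renamed)
body is. Induction on the derivation then shows that every atom of `Q` is true under `σ ∘ θ` for
every state `σ`, since composing the computed answer with a state is again a state.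
-/

mutual
  theorem subst_comp (θ η : ℕ → Term) : (t : Term) →
      subst (comp θ η) t = subst θ (subst η t)
    | .var _ => rfl
    | .const _ _ => rfl
    | .app f ts => by simp only [subst, substList_comp θ η ts]
  theorem substList_comp (θ η : ℕ → Term) : (ts : List Term) →
      substList (comp θ η) ts = substList θ (substList η ts)
    | [] => rfl
    | t :: ts => by simp only [substList, subst_comp θ η t, substList_comp θ η ts]
end

theorem comp_assoc (σ η θ : ℕ → Term) : comp σ (comp η θ) = comp (comp σ η) θ := by
  funext x
  exact (subst_comp σ η (θ x)).symm

theorem V3.and_eq_tt {a b : V3} : V3.and a b = V3.tt ↔ a = V3.tt ∧ b = V3.tt := by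
  cases a <;> cases b <;> simp [V3.and]

theorem V3.imp_tt_eq_tt {b : V3} : V3.imp V3.tt b = V3.tt ↔ b = V3.tt := by
  cases b <;> simp [V3.imp, V3.neg, V3.or]

theorem queryVal_eq_tt {I : Interp} {σ : ℕ → Term} {Q : List Atom} :
    queryVal I σ Q = V3.tt ↔ ∀ A ∈ Q, atomVal I σ A = V3.tt := by
  induction Q with
  | nil => simp [queryVal]
  | cons A Q ih =>
    simp only [queryVal] at ih
    simp only [queryVal, List.map_cons, List.foldr_cons, V3.and_eq_tt, ih, List.forall_mem_cons]

theorem atomVal_substAtom (I : Interp) (σ θ : ℕ → Term) (A : Atom) :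
    atomVal I σ (substAtom θ A) = atomVal I (comp σ θ) A := by
  simp only [atomVal, substAtom, substList_comp]

theorem modelsQuery_map_substAtom_iff {I : Interp} {θ : ℕ → Term} {Q : List Atom} :
    ModelsQuery I (Q.map (substAtom θ)) ↔ ∀ σ, ∀ A ∈ Q, atomVal I (comp σ θ) A = V3.tt := by
  simp only [ModelsQuery, queryVal_eq_tt, List.forall_mem_map, atomVal_substAtom]

theorem ModelsClause.atomVal_head_eq_tt {I : Interp} {c : Clause} (hc : ModelsClause I c)
    {σ : ℕ → Term} (hbody : ∀ B ∈ c.body, atomVal I σ B = V3.tt) :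
    atomVal I σ c.head = V3.tt := by
  have := hc σ
  rwa [queryVal_eq_tt.mpr hbody, V3.imp_tt_eq_tt] at this

theorem IsUnifier.atomVal_comp_eq {θ : ℕ → Term} {A B : Atom}
    (hθ : IsUnifier θ (atomT A) (atomT B)) (I : Interp) (σ : ℕ → Term) :
    atomVal I (comp σ θ) A = atomVal I (comp σ θ) B := by
  simp only [IsUnifier, atomT, subst, Term.app.injEq] at hθ
  simp only [atomVal, substList_comp, hθ.1, hθ.2]

theorem atomVal_eq_tt_of_resolvent {I : Interp} {c : Clause} (hc : ModelsClause I c)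
    {A : Atom} {ρ θ : ℕ → Term} (hθ : IsUnifier θ (atomT A) (atomT (substAtom ρ c.head)))
    {σ : ℕ → Term} (hbody : ∀ B ∈ c.body, atomVal I (comp σ θ) (substAtom ρ B) = V3.tt) :
    atomVal I (comp σ θ) A = V3.tt := by
  rw [hθ.atomVal_comp_eq, atomVal_substAtom]
  exact hc.atomVal_head_eq_tt fun B hB => by rw [← atomVal_substAtom]; exact hbody B hB

theorem Deriv.atomVal_comp_eq_tt {P : List Clause} {Q : List Atom} {θ : ℕ → Term}
    (h : Deriv P Q θ) {I : Interp} (hP : ModelsProgram I P) :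
    ∀ σ, ∀ A ∈ Q, atomVal I (comp σ θ) A = V3.tt := by
  induction h with
  | done => simp
  | step Q₁ Q₂ A c ρ θ η hc _ hmgu _ ih =>
    intro σ B hB
    have hres : ∀ B ∈ Q₁ ++ c.body.map (substAtom ρ) ++ Q₂,
        atomVal I (comp (comp σ η) θ) B = V3.tt := fun B hB => by
      rw [← atomVal_substAtom]
      exact ih σ _ (List.mem_map_of_mem hB)
    rw [List.mem_append, List.mem_cons] at hB
    rw [comp_assoc]
    rcases hB with hB₁ | rfl | hB₂
    · exact hres B (by simp [hB₁])
    · exact atomVal_eq_tt_of_resolvent (hP c hc) hmgu.1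
        fun B' hB' => hres _ (by simp [List.mem_map_of_mem hB'])
    · exact hres B (by simp [hB₂])

/-- soundness of successful TSLD-derivations: if there is a
successful TSLD-derivation of Q from P with computed answer substitution θ,
then every model of P is a model of θ(Q). -/
theorem tsld_soundness (P : List Clause) (Q : List Atom) (θ : ℕ → Term)
    (h : Deriv P Q θ) :
    ∀ I : Interp, ModelsProgram I P → ModelsQuery I (Q.map (substAtom θ)) :=
  fun _ hP => modelsQuery_map_substAtom_iff.mpr (h.atomVal_comp_eq_tt hP)
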